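/- In the proof of the implicit function theorem: let ũ ∈ M_w be embedded with ind_w(ũ) = 2, with positive punctures asymptotic to nondegenerate elliptic orbits x_j and weights δ_j, and let h be a nontrivial element of the kernel of the normal linearized operator D^N : E_w → F_w. Then the winding number of h satisfies 2·wind(h) = 2Σ_j w_j ≤ Σ_j(2α_w^N(x_j)+1) − #Γ = μ_w^N(ũ) − #Γ = ind_w(ũ) − 2 = 0; consequently h is nowhere vanishing and D^N is surjective. -/

import Mathlib

/-!
The index formula with `ind_w = 2` forces `∑ α_w^N(x_j) = 0`, so every nontrivial kernel
element has `wind h ≤ 0`; since each zero contributes positively to `wind h`, such an `h`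
has no zeros. A kernel element vanishing at one point is therefore zero, so evaluation
at a point embeds the kernel into `ℝ²` and `dim ker D^N ≤ 2 = ind_w`. The Fredholm index
then leaves no room for a cokernel.
-/

open Module

theorem sum_two_mul_add_one {ι : Type*} [Fintype ι] (a : ι → ℤ) :
    ∑ j, (2 * a j + 1) = 2 * ∑ j, a j + Fintype.card ι := by
  simp [Finset.sum_add_distrib, Finset.mul_sum]

theorem Submodule.finrank_le_of_apply_ne_zero {R M S V : Type*} [Ring R] [StrongRankCondition R]
    [AddCommGroup M] [Module R M] [AddCommGroup V] [Module R V] [Module.Finite R V]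
    (K : Submodule R M) (f : M →ₗ[R] S → V) (z : S) (hf : ∀ x ∈ K, x ≠ 0 → f x z ≠ 0) :
    finrank R K ≤ finrank R V := by
  let ev : K →ₗ[R] V := LinearMap.proj z ∘ₗ f ∘ₗ K.subtype
  have hev : Function.Injective ev := by
    refine (injective_iff_map_eq_zero ev).mpr fun x hx => ?_
    by_contra hne
    exact hf x x.2 (by simpa using hne) hx
  exact LinearMap.finrank_le_finrank_of_injective hev

theorem LinearMap.surjective_of_finrank_ker_le_index {K M N : Type*} [DivisionRing K]
    [AddCommGroup M] [Module K M] [AddCommGroup N] [Module K N] (f : M →ₗ[K] N)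
    [FiniteDimensional K (N ⧸ LinearMap.range f)] {i : ℤ}
    (hindex : (finrank K (LinearMap.ker f) : ℤ) - finrank K (N ⧸ LinearMap.range f) = i)
    (hker : (finrank K (LinearMap.ker f) : ℤ) ≤ i) :
    Function.Surjective f := by
  have hcoker : finrank K (N ⧸ LinearMap.range f) = 0 := by omega
  have : Subsingleton (N ⧸ LinearMap.range f) := finrank_zero_iff.mp hcoker
  exact LinearMap.range_eq_top.mp (Submodule.Quotient.subsingleton_iff.mp this)

theorem kernel_nonvanishing_and_surjective_general
    (n : ℕ)                                       -- #Γ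
    (Sdot : Type*) (hS : Nonempty Sdot)           -- the punctured sphere Ṡ
    (E F : Type*) [NormedAddCommGroup E] [NormedSpace ℝ E]
    [NormedAddCommGroup F] [NormedSpace ℝ F]
    (DN : E →L[ℝ] F)                              -- the normal linearized operator
    (coe : E →ₗ[ℝ] (Sdot → ℝ × ℝ))                -- sections of the normal bundle
    (αwN : Fin n → ℤ)                             -- weighted windings α_w^N(x_j)
    (wind : E → ℤ)                                -- winding numbers of kernel elements
    -- each nontrivial kernel element approaches `0` at the `j`-th puncture from the
    -- direction of an eigenfield with winding `w_j ≤ α_w^N(x_j)`, and `wind h = ∑ w_j`: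
    (hwind : ∀ h ∈ LinearMap.ker (DN : E →ₗ[ℝ] F), h ≠ 0 →
      ∃ w : Fin n → ℤ, (∀ j, w j ≤ αwN j) ∧ wind h = ∑ j, w j)
    -- `wind h` is the algebraic count of the zeros of `h`, each counted positively:
    (hzero : ∀ h ∈ LinearMap.ker (DN : E →ₗ[ℝ] F), h ≠ 0 → (∃ z, coe h z = 0) → 1 ≤ wind h)
    -- the weighted index formula `ind_w = μ_w^N + 2 - #Γ` with `ind_w(ũ) = 2`:
    (μwN indw : ℤ)
    (hμ : μwN = ∑ j, (2 * αwN j + 1))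
    (hindw : indw = μwN + 2 - (n : ℤ))
    (hind2 : indw = 2)
    -- `D^N` is Fredholm of index `ind_w`:
    (hcoker : FiniteDimensional ℝ (F ⧸ LinearMap.range (DN : E →ₗ[ℝ] F)))
    (hfred : (Module.finrank ℝ (LinearMap.ker (DN : E →ₗ[ℝ] F)) : ℤ) -
      (Module.finrank ℝ (F ⧸ LinearMap.range (DN : E →ₗ[ℝ] F)) : ℤ) = indw) :
    (∀ h ∈ LinearMap.ker (DN : E →ₗ[ℝ] F), h ≠ 0 → 2 * wind h ≤ 0) ∧
    (∀ h ∈ LinearMap.ker (DN : E →ₗ[ℝ] F), h ≠ 0 → ∀ z : Sdot, coe h z ≠ 0) ∧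
    Function.Surjective DN := by
  have hα : ∑ j, αwN j = 0 := by
    rw [sum_two_mul_add_one, Fintype.card_fin] at hμ
    omega
  have hwind_nonpos : ∀ h ∈ LinearMap.ker (DN : E →ₗ[ℝ] F), h ≠ 0 → wind h ≤ 0 := by
    intro h hh hne
    obtain ⟨w, hw, hsum⟩ := hwind h hh hne
    exact hsum ▸ hα ▸ Finset.sum_le_sum fun j _ => hw j
  have hnonvanishing : ∀ h ∈ LinearMap.ker (DN : E →ₗ[ℝ] F), h ≠ 0 → ∀ z, coe h z ≠ 0 :=
    fun h hh hne z hz => by linarith [hzero h hh hne ⟨z, hz⟩, hwind_nonpos h hh hne]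
  refine ⟨fun h hh hne => by linarith [hwind_nonpos h hh hne], hnonvanishing, ?_⟩
  obtain ⟨z⟩ := hS
  have hdim := (LinearMap.ker (DN : E →ₗ[ℝ] F)).finrank_le_of_apply_ne_zero coe z
    fun h hh hne => hnonvanishing h hh hne z
  rw [finrank_prod, finrank_self] at hdim
  exact LinearMap.surjective_of_finrank_ker_le_index (DN : E →ₗ[ℝ] F) hfred (by omega)

theorem kernel_nonvanishing_and_surjective
    (n : ℕ)                                       -- #Γ
    (Sdot : Type*) (hS : Nonempty Sdot)           -- the punctured sphere Ṡ
    (E F : Type*) [NormedAddCommGroup E] [NormedSpace ℝ E]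
    [NormedAddCommGroup F] [NormedSpace ℝ F]
    (DN : E →L[ℝ] F)                              -- the normal linearized operator
    (coe : E →ₗ[ℝ] (Sdot → ℝ × ℝ))                -- sections of the normal bundle
    (hcoe : Function.Injective coe)
    (αwN : Fin n → ℤ)                             -- weighted windings α_w^N(x_j)
    (wind : E → ℤ)                                -- winding numbers of kernel elements
    -- each nontrivial kernel element approaches `0` at the `j`-th puncture from the
    -- direction of an eigenfield with winding `w_j ≤ α_w^N(x_j)`, and `wind h = ∑ w_j`:
    (hwind : ∀ h ∈ LinearMap.ker (DN : E →ₗ[ℝ] F), h ≠ 0 →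
      ∃ w : Fin n → ℤ, (∀ j, w j ≤ αwN j) ∧ wind h = ∑ j, w j)
    -- `wind h` is the algebraic count of the zeros of `h`, each counted positively:
    (hzero : ∀ h ∈ LinearMap.ker (DN : E →ₗ[ℝ] F), h ≠ 0 → (∃ z, coe h z = 0) → 1 ≤ wind h)
    -- the weighted index formula `ind_w = μ_w^N + 2 - #Γ` with `ind_w(ũ) = 2`:
    (μwN indw : ℤ)
    (hμ : μwN = ∑ j, (2 * αwN j + 1))
    (hindw : indw = μwN + 2 - (n : ℤ))
    (hind2 : indw = 2)
    -- `D^N` is Fredholm of index `ind_w`: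
    (hker : FiniteDimensional ℝ (LinearMap.ker (DN : E →ₗ[ℝ] F)))
    (hcoker : FiniteDimensional ℝ (F ⧸ LinearMap.range (DN : E →ₗ[ℝ] F)))
    (hrange : IsClosed (LinearMap.range (DN : E →ₗ[ℝ] F) : Set F))
    (hfred : (Module.finrank ℝ (LinearMap.ker (DN : E →ₗ[ℝ] F)) : ℤ) -
      (Module.finrank ℝ (F ⧸ LinearMap.range (DN : E →ₗ[ℝ] F)) : ℤ) = indw) :
    (∀ h ∈ LinearMap.ker (DN : E →ₗ[ℝ] F), h ≠ 0 → 2 * wind h ≤ 0) ∧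
    (∀ h ∈ LinearMap.ker (DN : E →ₗ[ℝ] F), h ≠ 0 → ∀ z : Sdot, coe h z ≠ 0) ∧
    Function.Surjective DN :=
  kernel_nonvanishing_and_surjective_general n Sdot hS E F DN coe αwN wind hwind hzero μwN indw hμ
    hindw hind2 hcoker hfred
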